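/- arXiv:math/0402190 — 3 statements merged into one kernel-verified Lean document; each statement's English description precedes it below -/
import Mathlib

section
/- Let A be a commutative k-algebra, I ⊆ A an ideal, and i ≥ 1. Every element of Ω^i_{A/k} of the form a₀·da₁ ∧ ⋯ ∧ da_i with a_p ∈ I^{i+1} for some index p lies in the submodule F of Ω^i_{A/k} generated by exterior forms b₀·db₁ ∧ ⋯ ∧ db_i with all b_p ∈ I. -/
open KaehlerDifferential ExteriorAlgebra

section Aux

variable {k A : Type*} [Field k] [CharZero k] [CommRing A] [Algebra k A]

/-- The submodule generated by forms `b₀ · db₁ ∧ ⋯ ∧ db_i` with all `b_p ∈ I`. -/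
noncomputable def stmt4F (k : Type*) {A : Type*} [Field k] [CharZero k] [CommRing A]
    [Algebra k A] (I : Ideal A) (i : ℕ) : Submodule A (ExteriorAlgebra A (Ω[A⁄k])) :=
  Submodule.span A
    {w : ExteriorAlgebra A (Ω[A⁄k]) | ∃ b₀ : A, ∃ b : Fin i → A, b₀ ∈ I ∧ (∀ p, b p ∈ I) ∧
      w = b₀ • (List.ofFn fun p => ExteriorAlgebra.ι A (KaehlerDifferential.D k A (b p))).prod}

lemma stmt4_update_eq (a : Fin i → A) (q : Fin i) (z : A) :
    Function.update (fun p => D k A (a p)) q (D k A z)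
      = fun p => D k A (Function.update a q z p) := by
  funext p
  rw [Function.apply_update (fun _ x => D k A x) a q z p]

/-- Key lemma: if the coefficient lies in `I^(m+1)` and the entries indexed by `S` lie
in `I`, with `i ≤ S.card + m`, then the form lies in `stmt4F`. -/
lemma stmt4_key (I : Ideal A) (i : ℕ) :
    ∀ m : ℕ, ∀ a₀ ∈ I ^ (m + 1), ∀ a : Fin i → A, ∀ S : Finset (Fin i),
      (∀ p ∈ S, a p ∈ I) → i ≤ S.card + m →
      a₀ • ιMulti A i (fun p => D k A (a p)) ∈ stmt4F k I i := by
  intro m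
  induction m with
  | zero =>
    intro a₀ ha₀ a S hS hcard
    rw [pow_one] at ha₀
    have hScard : S.card = Fintype.card (Fin i) := by
      have := Finset.card_le_univ S
      simp only [Finset.card_univ, Fintype.card_fin] at *
      omega
    have hSuniv : S = Finset.univ := Finset.eq_univ_of_card S hScard
    apply Submodule.subset_span
    exact ⟨a₀, a, ha₀, fun p => hS p (hSuniv ▸ Finset.mem_univ p), by rw [ιMulti_apply]⟩
  | succ m IH =>
    intro a₀ ha₀ a S hS hcard
    by_cases hc : i ≤ S.card + m
    · exact IH a₀ (Ideal.pow_le_pow_right (by omega) ha₀) a S hS hc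
    -- pick a slot not in S
    have hcardlt : S.card < i := by omega
    have hq : ∃ q : Fin i, q ∉ S := by
      by_contra hcon
      push_neg at hcon
      have : S = Finset.univ := Finset.eq_univ_iff_forall.mpr hcon
      rw [this, Finset.card_univ, Fintype.card_fin] at hcardlt
      omega
    obtain ⟨q, hqS⟩ := hq
    rw [pow_succ] at ha₀
    refine Submodule.mul_induction_on
      (C := fun t => t • ιMulti A i (fun p => D k A (a p)) ∈ stmt4F k I i) ha₀
      (fun c hc' x hx => ?_) (fun x y hx hy => ?_)
    case _ =>
      beta_reduce
      set v : Fin i → Ω[A⁄k] := fun p => D k A (a p) with hv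
      have hleib : x • v q = D k A (x * a q) - (a q) • D k A x := by
        rw [Derivation.leibniz]
        simp [hv]
      have hxsmul : x • ιMulti A i v = ιMulti A i (Function.update v q (x • v q)) := by
        rw [AlternatingMap.map_update_smul, Function.update_eq_self]
      have hsplit : ιMulti A i (Function.update v q (x • v q))
          = ιMulti A i (Function.update v q (D k A (x * a q)))
            - (a q) • ιMulti A i (Function.update v q (D k A x)) := by
        rw [hleib, AlternatingMap.map_update_sub, AlternatingMap.map_update_smul]
      have hrw : (c * x) • ιMulti A i v
          = c • ιMulti A i (Function.update v q (D k A (x * a q)))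
            - (c * a q) • ιMulti A i (Function.update v q (D k A x)) := by
        rw [mul_smul, hxsmul, hsplit, smul_sub, smul_smul]
      rw [hrw]
      apply Submodule.sub_mem
      · rw [hv, stmt4_update_eq]
        apply IH c hc' _ (insert q S)
        · intro p hp
          rcases Finset.mem_insert.mp hp with h | h
          · subst h
            simp only [Function.update_self]
            exact Ideal.mul_mem_right _ _ hx
          · rw [Function.update_of_ne (by rintro rfl; exact hqS h)]
            exact hS p h
        · rw [Finset.card_insert_of_notMem hqS]
          omega
      · rw [hv, stmt4_update_eq]
        apply IH (c * a q) (Ideal.mul_mem_right _ _ hc') _ (insert q S)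
        · intro p hp
          rcases Finset.mem_insert.mp hp with h | h
          · subst h
            simpa using hx
          · rw [Function.update_of_ne (by rintro rfl; exact hqS h)]
            exact hS p h
        · rw [Finset.card_insert_of_notMem hqS]
          omega
    case _ =>
      beta_reduce at hx hy ⊢
      rw [add_smul]
      exact Submodule.add_mem _ hx hy

lemma stmt4_two_base (I : Ideal A) (i : ℕ) (hi : 1 ≤ i) (p : Fin i)
    (z : A) (hz : z ∈ I) (a₀ : A) (h0 : a₀ ∈ I ^ i) (a : Fin i → A) :
    a₀ • ιMulti A i (Function.update (fun p' => D k A (a p')) p (D k A z))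
      ∈ stmt4F k I i := by
  rw [stmt4_update_eq]
  have hi' : i = (i - 1) + 1 := by omega
  apply stmt4_key I i (i - 1) a₀ (by rwa [← hi']) _ {p}
  · intro p' hp'
    rw [Finset.mem_singleton] at hp'
    subst hp'
    simpa using hz
  · simp only [Finset.card_singleton]
    omega

lemma stmt4_two (I : Ideal A) (i : ℕ) (hi : 1 ≤ i) (p : Fin i) :
    ∀ n, 1 ≤ n → ∀ m, n + m = i + 1 → ∀ z ∈ I ^ n, ∀ a₀ ∈ I ^ m, ∀ a : Fin i → A,
      a₀ • ιMulti A i (Function.update (fun p' => D k A (a p')) p (D k A z))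
        ∈ stmt4F k I i := by
  intro n hn
  induction n, hn using Nat.le_induction with
  | base =>
    intro m hm z hz a₀ ha₀ a
    rw [pow_one] at hz
    have hmi : m = i := by omega
    exact stmt4_two_base I i hi p z hz a₀ (hmi ▸ ha₀) a
  | succ n hn IH =>
    intro m hm z hz a₀ ha₀ a
    rw [pow_succ] at hz
    refine Submodule.mul_induction_on
      (C := fun t => a₀ • ιMulti A i (Function.update (fun p' => D k A (a p')) p (D k A t))
        ∈ stmt4F k I i) hz (fun c hc x hx => ?_) (fun x y hx hy => ?_)
    case _ =>
      beta_reduce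
      have hleib : D k A (c * x) = c • D k A x + x • D k A c := Derivation.leibniz _ _ _
      have hsplit : a₀ • ιMulti A i (Function.update (fun p' => D k A (a p')) p (D k A (c * x)))
          = (a₀ * c) • ιMulti A i (Function.update (fun p' => D k A (a p')) p (D k A x))
            + (a₀ * x) • ιMulti A i (Function.update (fun p' => D k A (a p')) p (D k A c)) := by
        rw [hleib, AlternatingMap.map_update_add, AlternatingMap.map_update_smul,
          AlternatingMap.map_update_smul, smul_add, smul_smul, smul_smul]
      rw [hsplit]
      apply Submodule.add_mem
      · -- coefficient a₀ * c ∈ I ^ (m + n) = I ^ i, slot entry x ∈ I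
        have hmem : a₀ * c ∈ I ^ i := by
          have : a₀ * c ∈ I ^ m * I ^ n := Ideal.mul_mem_mul ha₀ hc
          rwa [← pow_add, show m + n = i by omega] at this
        exact stmt4_two_base I i hi p x hx (a₀ * c) hmem a
      · -- coefficient a₀ * x ∈ I ^ (m + 1), slot entry c ∈ I ^ n
        have hmem : a₀ * x ∈ I ^ (m + 1) := by
          have : a₀ * x ∈ I ^ m * I := Ideal.mul_mem_mul ha₀ hx
          rwa [← pow_succ] at this
        exact IH (m + 1) (by omega) c hc (a₀ * x) hmem a
    case _ =>
      beta_reduce at hx hy ⊢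
      have hDadd : D k A (x + y) = D k A x + D k A y := map_add _ _ _
      rw [hDadd, AlternatingMap.map_update_add, smul_add]
      exact Submodule.add_mem _ hx hy

end Aux

/-- For a commutative `k`-algebra `A`, an ideal `I ⊆ A` and `i ≥ 1`, every
`i`-form `a₀·da₁ ∧ ⋯ ∧ da_i` (viewed in the exterior algebra of `Ω¹_{A/k}`) in which some
`a_p` lies in `I^{i+1}` belongs to the submodule generated by the forms
`b₀·db₁ ∧ ⋯ ∧ db_i` with all `b_p ∈ I`. -/
theorem stmt4 (k A : Type*) [Field k] [CharZero k] [CommRing A] [Algebra k A]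
    (I : Ideal A) (i : ℕ) (hi : 1 ≤ i)
    (a₀ : A) (a : Fin i → A)
    (h : a₀ ∈ I ^ (i + 1) ∨ ∃ p : Fin i, a p ∈ I ^ (i + 1)) :
    a₀ • (List.ofFn fun p => ExteriorAlgebra.ι A (KaehlerDifferential.D k A (a p))).prod ∈
      Submodule.span A
        {w : ExteriorAlgebra A (Ω[A⁄k]) | ∃ b₀ : A, ∃ b : Fin i → A, b₀ ∈ I ∧ (∀ p, b p ∈ I) ∧
          w = b₀ • (List.ofFn fun p => ExteriorAlgebra.ι A (KaehlerDifferential.D k A (b p))).prod} := by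
  have key : a₀ • ιMulti A i (fun p => D k A (a p)) ∈ stmt4F k I i := by
    rcases h with h0 | ⟨p, hp⟩
    · -- a₀ ∈ I^(i+1): apply key lemma with m = i, S = ∅
      exact stmt4_key I i i a₀ h0 a ∅ (by simp) (by simp)
    · -- a p ∈ I^(i+1): apply stmt4_two with n = i+1, m = 0
      have h0 : a₀ ∈ I ^ 0 := by simpa using Submodule.mem_top
      have := stmt4_two (k := k) I i hi p (i + 1) (by omega) 0 (by omega) (a p) hp a₀ h0 a
      rw [stmt4_update_eq, show Function.update a p (a p) = a from Function.update_eq_self p a] at this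
      exact this
  rw [ιMulti_apply] at key
  exact key
end

section
/- Let B_r = ℚ[t]/(t^r) for r ≥ 1. Then the natural quotient map induces the zero map on first André–Quillen homology D_1^ℚ(B_{2r}) → D_1^ℚ(B_r). -/
/-!
Present both algebras as quotients of `P = ℚ[t]`: `B_{2r} = P/I` and `B_r = P/J` with
`I = (t^{2r}) = J²`. The identity of `P` lifts the quotient map, and it sends `I` into `J²`,
so the induced map on conormal modules `I/I² → J/J²` is zero, and so is its restriction
`D₁(B_{2r}) ⊆ I/I² → D₁(B_r) ⊆ J/J²`. Since `D₁` does not depend on the choice of polynomial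
presentation, this computes the map in question.
-/

open Polynomial

namespace Algebra.Extension

variable {R S T : Type*} [CommRing R] [CommRing S] [CommRing T] [Algebra R S] [Algebra R T]
  [Algebra S T] {P : Extension R S} {P' : Extension R T}

lemma Hom.map_le_ker (f : P.Hom P') :
    (RingHom.ker ((algebraMap S T).comp (algebraMap P.Ring S))).map f.toRingHom ≤ P'.ker := by
  rw [Ideal.map_le_iff_le_comap]
  intro x hx
  simpa [Extension.ker, RingHom.mem_ker] using hx

lemma Cotangent.map_eq_zero_of_ker_le_sq (f : P.Hom P')
    (h : P.ker ≤ RingHom.ker ((algebraMap S T).comp (algebraMap P.Ring S)) ^ 2) :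
    Cotangent.map f = 0 := by
  refine LinearMap.ext fun x ↦ ?_
  obtain ⟨y, rfl⟩ := Cotangent.mk_surjective x
  rw [Cotangent.map_mk, LinearMap.zero_apply, Cotangent.mk_eq_zero_iff]
  have hy := Ideal.mem_map_of_mem f.toRingHom (h y.2)
  rw [Ideal.map_pow] at hy
  exact Ideal.pow_right_mono f.map_le_ker 2 hy

lemma H1Cotangent.map_eq_zero_of_ker_le_sq (f : P.Hom P')
    (h : P.ker ≤ RingHom.ker ((algebraMap S T).comp (algebraMap P.Ring S)) ^ 2) :
    H1Cotangent.map f = 0 := by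
  refine LinearMap.ext fun x ↦ h1Cotangentι_ext _ _ ?_
  change Cotangent.map f x.1 = 0
  rw [Cotangent.map_eq_zero_of_ker_le_sq f h, LinearMap.zero_apply]

end Algebra.Extension

lemma Algebra.H1Cotangent.map_eq_zero_of_ker_le_sq {R S T : Type*} [CommRing R] [CommRing S]
    [CommRing T] [Algebra R S] [Algebra R T] [Algebra S T] [IsScalarTower R S T]
    {P : Extension R S} (g : P.Hom (Generators.self R T).toExtension)
    (h : P.ker ≤ RingHom.ker ((algebraMap S T).comp (algebraMap P.Ring S)) ^ 2) :
    H1Cotangent.map R R S T = 0 := by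
  rw [H1Cotangent.map, Extension.H1Cotangent.map_eq _ (g.comp P.defaultHom),
    Extension.H1Cotangent.map_comp, Extension.H1Cotangent.map_eq_zero_of_ker_le_sq g h,
    LinearMap.restrictScalars_zero, LinearMap.zero_comp]

namespace Polynomial

variable {R : Type*} [CommRing R] {I J : Ideal R[X]}
  [Algebra (R[X] ⧸ I) (R[X] ⧸ J)] [IsScalarTower R (R[X] ⧸ I) (R[X] ⧸ J)]

noncomputable def quotientExtension (I : Ideal R[X]) : Algebra.Extension R (R[X] ⧸ I) :=
  .ofSurjective (Ideal.Quotient.mkₐ R I) (Ideal.Quotient.mkₐ_surjective R I)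

lemma ker_quotientExtension : (quotientExtension I).ker = I :=
  Ideal.Quotient.mkₐ_ker R I

noncomputable def quotientExtensionHomSelf
    (halg : (algebraMap (R[X] ⧸ I) (R[X] ⧸ J)).comp (Ideal.Quotient.mk I) = Ideal.Quotient.mk J) :
    (quotientExtension I).Hom (Algebra.Generators.self R (R[X] ⧸ J)).toExtension :=
  have H : (MvPolynomial.aeval (R := R) id).comp (aeval (MvPolynomial.X (Ideal.Quotient.mk J X))) =
      (IsScalarTower.toAlgHom R (R[X] ⧸ I) (R[X] ⧸ J)).comp (Ideal.Quotient.mkₐ R I) :=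
    Polynomial.algHom_ext <| by simpa using congr($halg X).symm
  .ofAlgHom (aeval (MvPolynomial.X (Ideal.Quotient.mk J X))) H

theorem h1Cotangent_map_quotient_eq_zero (hIJ : I ≤ J ^ 2)
    (halg : (algebraMap (R[X] ⧸ I) (R[X] ⧸ J)).comp (Ideal.Quotient.mk I) = Ideal.Quotient.mk J) :
    Algebra.H1Cotangent.map R R (R[X] ⧸ I) (R[X] ⧸ J) = 0 := by
  refine Algebra.H1Cotangent.map_eq_zero_of_ker_le_sq (quotientExtensionHomSelf halg) ?_
  have hker : RingHom.ker ((algebraMap (R[X] ⧸ I) (R[X] ⧸ J)).comp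
      (algebraMap (quotientExtension I).Ring (R[X] ⧸ I))) = J :=
    Ideal.ext fun p ↦ RingHom.mem_ker.trans <|
      (congrArg (· = 0) congr($halg p)).to_iff.trans Ideal.Quotient.eq_zero_iff_mem
  rw [hker, ker_quotientExtension]
  exact hIJ

end Polynomial

theorem stmt5_general (r : ℕ)
    (f : (ℚ[X] ⧸ Ideal.span {(X : ℚ[X]) ^ (2 * r)}) →ₐ[ℚ]
         (ℚ[X] ⧸ Ideal.span {(X : ℚ[X]) ^ r}))
    (hf : f (Ideal.Quotient.mk _ X) = Ideal.Quotient.mk _ X) :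
    letI : Algebra (ℚ[X] ⧸ Ideal.span {(X : ℚ[X]) ^ (2 * r)})
        (ℚ[X] ⧸ Ideal.span {(X : ℚ[X]) ^ r}) := f.toRingHom.toAlgebra
    haveI : IsScalarTower ℚ (ℚ[X] ⧸ Ideal.span {(X : ℚ[X]) ^ (2 * r)})
        (ℚ[X] ⧸ Ideal.span {(X : ℚ[X]) ^ r}) :=
      IsScalarTower.of_algebraMap_eq' (f.comp_algebraMap).symm
    Algebra.H1Cotangent.map ℚ ℚ (ℚ[X] ⧸ Ideal.span {(X : ℚ[X]) ^ (2 * r)})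
      (ℚ[X] ⧸ Ideal.span {(X : ℚ[X]) ^ r}) = 0 := by
  let := f.toRingHom.toAlgebra
  have := IsScalarTower.of_algebraMap_eq' f.comp_algebraMap.symm
  have hf' : f.comp (Ideal.Quotient.mkₐ ℚ _) = Ideal.Quotient.mkₐ ℚ _ :=
    Polynomial.algHom_ext (by simpa using hf)
  refine Polynomial.h1Cotangent_map_quotient_eq_zero ?_ congr(($hf').toRingHom)
  rw [Ideal.span_singleton_pow, ← pow_mul, mul_comm]

/-- For `B_r = ℚ[t]/(t^r)`, the natural surjection `B_{2r} → B_r` (sending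
`t ↦ t`) induces the zero map on first André–Quillen homology
`D₁^ℚ(B_{2r}) → D₁^ℚ(B_r)` (formalized as `H¹` of the cotangent complex). -/
theorem stmt5 (r : ℕ) (hr : 1 ≤ r)
    (f : (ℚ[X] ⧸ Ideal.span {(X : ℚ[X]) ^ (2 * r)}) →ₐ[ℚ]
         (ℚ[X] ⧸ Ideal.span {(X : ℚ[X]) ^ r}))
    (hf : f (Ideal.Quotient.mk _ X) = Ideal.Quotient.mk _ X) :
    letI : Algebra (ℚ[X] ⧸ Ideal.span {(X : ℚ[X]) ^ (2 * r)})
        (ℚ[X] ⧸ Ideal.span {(X : ℚ[X]) ^ r}) := f.toRingHom.toAlgebra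
    haveI : IsScalarTower ℚ (ℚ[X] ⧸ Ideal.span {(X : ℚ[X]) ^ (2 * r)})
        (ℚ[X] ⧸ Ideal.span {(X : ℚ[X]) ^ r}) :=
      IsScalarTower.of_algebraMap_eq' (f.comp_algebraMap).symm
    Algebra.H1Cotangent.map ℚ ℚ (ℚ[X] ⧸ Ideal.span {(X : ℚ[X]) ^ (2 * r)})
      (ℚ[X] ⧸ Ideal.span {(X : ℚ[X]) ^ r}) = 0 :=
  stmt5_general r f hf
end

section
/- Let K be a field of characteristic zero and k ⊆ K any subfield. Then the André–Quillen homology D_i^k(K) vanishes for all i > 0. -/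
/-!
Over a transcendence basis `s`, the extension `k ⊆ k(s)` is a localization of a polynomial ring,
hence formally smooth, and `k(s) ⊆ K` is algebraic, hence separable in characteristic zero and so
formally étale. Formal smoothness of `k ⊆ K` then kills `H¹` of the cotangent complex.
-/

universe u

theorem Algebra.FormallySmooth.of_charZero (k K : Type*) [Field k] [Field K] [Algebra k K]
    [CharZero k] : Algebra.FormallySmooth k K := by
  obtain ⟨s, hs⟩ := exists_isTranscendenceBasis k K
  have : Algebra.IsAlgebraic (IntermediateField.adjoin k (Set.range ((↑) : s → K))) K :=
    hs.isAlgebraic_field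
  have : CharZero (IntermediateField.adjoin k (Set.range ((↑) : s → K))) :=
    charZero_of_injective_algebraMap (algebraMap k _).injective
  exact .of_algebraicIndependent_of_isSeparable hs.1

/-- For a field extension `k ⊆ K` in characteristic zero, the André–Quillen
homology `D_i^k(K)` vanishes for all `i > 0`.  Mathlib only has the first homology of the
cotangent complex, so we formalize the vanishing as: `H¹(L_{K/k}) = 0`, together with
`K` being formally smooth over `k` (which expresses that the whole cotangent complex is
concentrated in degree `0`, i.e. all higher André–Quillen homology vanishes). -/
theorem stmt6 (k K : Type u) [Field k] [Field K] [Algebra k K] [CharZero k] :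
    Subsingleton (Algebra.H1Cotangent k K) ∧ Algebra.FormallySmooth k K := by
  have := Algebra.FormallySmooth.of_charZero k K
  exact ⟨inferInstance, this⟩
end
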